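/- Main stability theorem: let m ∈ M_X and let σ be the unique maximizer of the von Neumann entropy over C(m). If a sequence of density matrices (ρ_n) satisfies tr(ρ_n X_i) → m_i for each i = 1,…,k and S(ρ_n) → S(σ), then ‖ρ_n − σ‖₁ → 0, and consequently tr((ρ_n − σ)A) → 0 for every matrix A ∈ M_d(ℂ). -/

import Mathlib

open scoped BigOperators ComplexOrder Matrix
noncomputable section
namespace MaxEnt

/-- A density matrix: positive semidefinite with trace one. -/
def IsDensityMatrix {d : ℕ} (ρ : Matrix (Fin d) (Fin d) ℂ) : Prop :=
  ρ.PosSemidef ∧ ρ.trace = 1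

/-- The set `M_X` of attainable moment vectors. -/
def momentSet {d k : ℕ} (X : Fin k → Matrix (Fin d) (Fin d) ℂ) : Set (Fin k → ℝ) :=
  {y | ∃ ρ, IsDensityMatrix ρ ∧ ∀ i, (ρ * X i).trace = (y i : ℂ)}

/-- The constraint set `C(m)`. -/
def constraintSet {d k : ℕ} (X : Fin k → Matrix (Fin d) (Fin d) ℂ) (m : Fin k → ℝ) :
    Set (Matrix (Fin d) (Fin d) ℂ) :=
  {ρ | IsDensityMatrix ρ ∧ ∀ i, (ρ * X i).trace = (m i : ℂ)}

/-- Largest eigenvalue of a Hermitian matrix (junk value `0` otherwise). -/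
def lambdaMax {d : ℕ} (H : Matrix (Fin d) (Fin d) ℂ) : ℝ :=
  if h : H.IsHermitian then ⨆ i, h.eigenvalues i else 0

/-- Von Neumann entropy `S(ρ) = -tr(ρ log ρ)` computed via eigenvalues,
with the convention `0 log 0 = 0` (junk value `0` for non-Hermitian input). -/
def entropy {d : ℕ} (ρ : Matrix (Fin d) (Fin d) ℂ) : ℝ :=
  if h : ρ.IsHermitian then -∑ i, h.eigenvalues i * Real.log (h.eigenvalues i) else 0

/-- Matrix logarithm of a Hermitian matrix via functional calculus on eigenvalues. -/
def matLog {d : ℕ} (A : Matrix (Fin d) (Fin d) ℂ) : Matrix (Fin d) (Fin d) ℂ :=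
  if h : A.IsHermitian then
    (h.eigenvectorUnitary : Matrix (Fin d) (Fin d) ℂ) *
      Matrix.diagonal (fun i => (Real.log (h.eigenvalues i) : ℂ)) *
      (star (h.eigenvectorUnitary : Matrix (Fin d) (Fin d) ℂ))
  else 0

/-- Quantum relative entropy `D(ρ‖σ) = tr(ρ log ρ) - tr(ρ log σ)`, where
`tr(ρ log ρ) = -S(ρ)` uses the `0 log 0 = 0` convention. -/
def relEntropy {d : ℕ} (ρ σ : Matrix (Fin d) (Fin d) ℂ) : ℝ :=
  -entropy ρ - ((ρ * matLog σ).trace).re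

/-- Trace norm `‖A‖₁ = tr √(AᴴA)`. -/
def traceNorm {n : Type*} [Fintype n] [DecidableEq n] (A : Matrix n n ℂ) : ℝ :=
  (((Matrix.posSemidef_conjTranspose_mul_self A).1.eigenvectorUnitary : Matrix n n ℂ) *
      Matrix.diagonal (((↑) : ℝ → ℂ) ∘ Real.sqrt ∘ (Matrix.posSemidef_conjTranspose_mul_self A).1.eigenvalues) *
      (star (Matrix.posSemidef_conjTranspose_mul_self A).1.eigenvectorUnitary : Matrix n n ℂ)).trace.re

/-- Operator norm (ℓ²→ℓ²) of a matrix. -/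
def opNorm {d : ℕ} (A : Matrix (Fin d) (Fin d) ℂ) : ℝ :=
  ‖Matrix.toEuclideanCLM (𝕜 := ℂ) A‖

/-- The Gibbs state `σ_λ = exp(-Σ λᵢ Xᵢ) / tr(exp(-Σ λᵢ Xᵢ))`. -/
def gibbs {d k : ℕ} (X : Fin k → Matrix (Fin d) (Fin d) ℂ) (lam : Fin k → ℝ) :
    Matrix (Fin d) (Fin d) ℂ :=
  ((NormedSpace.exp (-(∑ i, (lam i : ℂ) • X i))).trace)⁻¹ •
    NormedSpace.exp (-(∑ i, (lam i : ℂ) • X i))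

/-- The log-partition function `φ(λ) = log tr(exp(-Σ λᵢ Xᵢ))`. -/
def logPartition {d k : ℕ} (X : Fin k → Matrix (Fin d) (Fin d) ℂ) (lam : Fin k → ℝ) : ℝ :=
  Real.log (((NormedSpace.exp (-(∑ i, (lam i : ℂ) • X i))).trace).re)

section Aux

variable {d : ℕ}

local notation "M" => Matrix (Fin d) (Fin d) ℂ

lemma unitary_conj_pow {U B : Matrix (Fin d) (Fin d) ℂ} (h1 : star U * U = 1)
    (h2 : U * star U = 1) (n : ℕ) : (U * B * star U) ^ n = U * B ^ n * star U := by
  induction n with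
  | zero => simp [h2]
  | succ n ih =>
      rw [pow_succ, ih, pow_succ]
      calc U * B ^ n * star U * (U * B * star U)
          = U * B ^ n * (star U * U) * B * star U := by
            simp only [Matrix.mul_assoc]
        _ = U * (B ^ n * B) * star U := by rw [h1]; simp only [Matrix.mul_one, Matrix.mul_assoc]

lemma trace_pow_eq_sum {A : Matrix (Fin d) (Fin d) ℂ} (hA : A.IsHermitian) (n : ℕ) :
    (A ^ n).trace = ∑ i, (hA.eigenvalues i : ℂ) ^ n := by
  have hU1 : star (hA.eigenvectorUnitary : M) * (hA.eigenvectorUnitary : M) = 1 :=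
    ((Unitary.mem_iff).mp hA.eigenvectorUnitary.2).1
  have hU2 : (hA.eigenvectorUnitary : M) * star (hA.eigenvectorUnitary : M) = 1 :=
    ((Unitary.mem_iff).mp hA.eigenvectorUnitary.2).2
  conv_lhs => rw [hA.spectral_theorem, Unitary.conjStarAlgAut_apply]
  rw [unitary_conj_pow hU1 hU2, Matrix.trace_mul_cycle, hU1, Matrix.one_mul,
    Matrix.diagonal_pow, Matrix.trace_diagonal]
  simp

lemma trace_eq_sum_eigenvalues {A : Matrix (Fin d) (Fin d) ℂ} (hA : A.IsHermitian) :
    A.trace = ∑ i, (hA.eigenvalues i : ℂ) := by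
  simpa using trace_pow_eq_sum hA 1


lemma sum_eigenvalues_eq_one {ρ : Matrix (Fin d) (Fin d) ℂ} (h : IsDensityMatrix ρ) :
    ∑ i, h.1.1.eigenvalues i = 1 := by
  have key : ((∑ i, h.1.1.eigenvalues i : ℝ) : ℂ) = ((1 : ℝ) : ℂ) := by
    push_cast
    rw [← trace_eq_sum_eigenvalues h.1.1, h.2]
  exact_mod_cast key

lemma eigenvalues_mem_Icc {ρ : Matrix (Fin d) (Fin d) ℂ} (h : IsDensityMatrix ρ) (i : Fin d) :
    h.1.1.eigenvalues i ∈ Set.Icc (0 : ℝ) 1 := by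
  refine ⟨h.1.eigenvalues_nonneg i, ?_⟩
  rw [← sum_eigenvalues_eq_one h]
  exact Finset.single_le_sum (fun j _ => h.1.eigenvalues_nonneg j) (Finset.mem_univ i)


lemma entropy_eq_sum {ρ : Matrix (Fin d) (Fin d) ℂ} (h : ρ.IsHermitian) :
    entropy ρ = ∑ i, Real.negMulLog (h.eigenvalues i) := by
  rw [entropy, dif_pos h, ← Finset.sum_neg_distrib]
  simp [Real.negMulLog, neg_mul]

lemma poly_trace (p : Polynomial ℝ) {A : Matrix (Fin d) (Fin d) ℂ} (hA : A.IsHermitian) :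
    ∑ n ∈ Finset.range (p.natDegree + 1), (p.coeff n : ℂ) * (A ^ n).trace
      = ((∑ i, p.eval (hA.eigenvalues i) : ℝ) : ℂ) := by
  have : ∀ n, (A ^ n).trace = ∑ i, (hA.eigenvalues i : ℂ) ^ n := trace_pow_eq_sum hA
  simp_rw [this, Finset.mul_sum]
  rw [Finset.sum_comm]
  push_cast
  refine Finset.sum_congr rfl fun i _ => ?_
  rw [Polynomial.eval_eq_sum_range]
  push_cast
  ring_nf
  exact Finset.sum_congr rfl fun _ _ => mul_comm _ _

lemma entropy_tendsto {ρn : ℕ → Matrix (Fin d) (Fin d) ℂ} {ρl : Matrix (Fin d) (Fin d) ℂ}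
    (hn : ∀ n, IsDensityMatrix (ρn n)) (hl : IsDensityMatrix ρl)
    (hlim : Filter.Tendsto ρn Filter.atTop (nhds ρl)) :
    Filter.Tendsto (fun n => entropy (ρn n)) Filter.atTop (nhds (entropy ρl)) := by
  rw [Metric.tendsto_atTop]
  intro ε hε
  set δ : ℝ := ε / (3 * (d + 1)) with hδdef
  have hδ : 0 < δ := by positivity
  obtain ⟨p, hp⟩ := exists_polynomial_near_of_continuousOn 0 1 Real.negMulLog
    (Real.continuous_negMulLog.continuousOn) δ hδ
  set T : Matrix (Fin d) (Fin d) ℂ → ℂ :=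
    fun A => ∑ n ∈ Finset.range (p.natDegree + 1), (p.coeff n : ℂ) * (A ^ n).trace with hT
  have happrox : ∀ ρ : Matrix (Fin d) (Fin d) ℂ, IsDensityMatrix ρ →
      |entropy ρ - (T ρ).re| ≤ d * δ := by
    intro ρ h
    have h1 : T ρ = ((∑ i, p.eval (h.1.1.eigenvalues i) : ℝ) : ℂ) := poly_trace p h.1.1
    rw [h1, Complex.ofReal_re, entropy_eq_sum h.1.1, ← Finset.sum_sub_distrib]
    calc |∑ i, (Real.negMulLog (h.1.1.eigenvalues i) - p.eval (h.1.1.eigenvalues i))|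
        ≤ ∑ i, |Real.negMulLog (h.1.1.eigenvalues i) - p.eval (h.1.1.eigenvalues i)| :=
          Finset.abs_sum_le_sum_abs _ _
      _ ≤ ∑ _i : Fin d, δ := by
          refine Finset.sum_le_sum fun i _ => ?_
          rw [abs_sub_comm]
          exact (hp _ (eigenvalues_mem_Icc h i)).le
      _ = d * δ := by simp [mul_comm]
  have hTcont : Continuous fun A : Matrix (Fin d) (Fin d) ℂ => (T A).re := by
    refine Complex.continuous_re.comp ?_
    exact continuous_finset_sum _ fun n _ => continuous_const.mul ((continuous_pow n).matrix_trace)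
  have h2 : Filter.Tendsto (fun n => (T (ρn n)).re) Filter.atTop (nhds ((T ρl).re)) :=
    (hTcont.tendsto ρl).comp hlim
  rw [Metric.tendsto_atTop] at h2
  obtain ⟨N, hN⟩ := h2 (ε / 3) (by positivity)
  refine ⟨N, fun n hnN => ?_⟩
  have hmid := hN n hnN
  rw [Real.dist_eq] at hmid ⊢
  have e1 := happrox _ (hn n)
  have e2 := happrox _ hl
  have hdd : (d : ℝ) * δ ≤ ε / 3 := by
    rw [hδdef]
    have hd1 : (0:ℝ) < 3 * ((d:ℝ) + 1) := by positivity
    rw [← mul_div_assoc, div_le_div_iff₀ hd1 (by norm_num : (0:ℝ) < 3)]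
    nlinarith [hε.le, Nat.cast_nonneg (α := ℝ) d]
  have t1 : |entropy (ρn n) - entropy ρl| ≤
      |entropy (ρn n) - (T (ρn n)).re| + |(T (ρn n)).re - entropy ρl| :=
    abs_sub_le _ _ _
  have t2 : |(T (ρn n)).re - entropy ρl| ≤
      |(T (ρn n)).re - (T ρl).re| + |(T ρl).re - entropy ρl| := abs_sub_le _ _ _
  have e2' : |(T ρl).re - entropy ρl| ≤ d * δ := by rwa [abs_sub_comm] at e2
  linarith

lemma entry_norm_le {ρ : Matrix (Fin d) (Fin d) ℂ} (h : IsDensityMatrix ρ) (i j : Fin d) :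
    ‖ρ i j‖ ≤ 1 := by
  have h1 : (ρ ^ 2).trace = ((∑ i, (h.1.1.eigenvalues i) ^ 2 : ℝ) : ℂ) := by
    rw [trace_pow_eq_sum h.1.1]
    push_cast
    rfl
  have h2 : (∑ i, (h.1.1.eigenvalues i) ^ 2 : ℝ) ≤ 1 := by
    rw [← sum_eigenvalues_eq_one h]
    refine Finset.sum_le_sum fun i _ => ?_
    obtain ⟨h0, h1'⟩ := eigenvalues_mem_Icc h i
    nlinarith
  have h3 : (ρ ^ 2).trace = ((∑ a, ∑ b, Complex.normSq (ρ a b) : ℝ) : ℂ) := by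
    rw [pow_two]
    simp only [Matrix.trace, Matrix.diag, Matrix.mul_apply]
    push_cast
    refine Finset.sum_congr rfl fun a _ => Finset.sum_congr rfl fun b _ => ?_
    rw [← h.1.1.apply a b, Complex.star_def, Complex.normSq_conj,
      Complex.normSq_eq_conj_mul_self]
  have h4 : (∑ a, ∑ b, Complex.normSq (ρ a b) : ℝ) ≤ 1 := by
    have := h1.symm.trans h3
    exact_mod_cast (Complex.ofReal_inj.mp this) ▸ h2
  have h5 : Complex.normSq (ρ i j) ≤ 1 := by
    refine le_trans ?_ h4
    calc Complex.normSq (ρ i j) ≤ ∑ b, Complex.normSq (ρ i b) :=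
          Finset.single_le_sum (fun b _ => Complex.normSq_nonneg _) (Finset.mem_univ j)
      _ ≤ ∑ a, ∑ b, Complex.normSq (ρ a b) :=
          Finset.single_le_sum
            (fun a _ => Finset.sum_nonneg fun b _ => Complex.normSq_nonneg _)
            (Finset.mem_univ i)
  have h6 : ‖ρ i j‖ ^ 2 ≤ 1 := by rwa [Complex.normSq_eq_norm_sq] at h5
  nlinarith [norm_nonneg (ρ i j)]

lemma isClosed_density : IsClosed {ρ : Matrix (Fin d) (Fin d) ℂ | IsDensityMatrix ρ} := by
  have hzle : IsClosed {z : ℂ | 0 ≤ z} := by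
    have : {z : ℂ | 0 ≤ z} = {z : ℂ | 0 ≤ z.re} ∩ {z : ℂ | z.im = 0} := by
      ext z
      simp [Complex.le_def, eq_comm]
    rw [this]
    exact (isClosed_le continuous_const Complex.continuous_re).inter
      (isClosed_eq Complex.continuous_im continuous_const)
  have h1 : IsClosed {ρ : Matrix (Fin d) (Fin d) ℂ | ρ.IsHermitian} :=
    isClosed_eq (continuous_id.matrix_conjTranspose) continuous_id
  have h2 : IsClosed {ρ : Matrix (Fin d) (Fin d) ℂ |
      ∀ x : Fin d → ℂ, 0 ≤ dotProduct (star x) (ρ *ᵥ x)} := by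
    have : {ρ : Matrix (Fin d) (Fin d) ℂ |
        ∀ x : Fin d → ℂ, 0 ≤ dotProduct (star x) (ρ *ᵥ x)} =
        ⋂ x : Fin d → ℂ, {ρ | 0 ≤ dotProduct (star x) (ρ *ᵥ x)} := by
      ext ρ; simp
    rw [this]
    refine isClosed_iInter fun x => ?_
    exact hzle.preimage (continuous_const.dotProduct (continuous_id.matrix_mulVec
      continuous_const))
  have h3 : IsClosed {ρ : Matrix (Fin d) (Fin d) ℂ | ρ.trace = 1} :=
    isClosed_eq (continuous_id.matrix_trace) continuous_const
  have : {ρ : Matrix (Fin d) (Fin d) ℂ | IsDensityMatrix ρ} =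
      ({ρ : Matrix (Fin d) (Fin d) ℂ | ρ.IsHermitian} ∩
        {ρ | ∀ x : Fin d → ℂ, 0 ≤ dotProduct (star x) (ρ *ᵥ x)}) ∩
        {ρ | ρ.trace = 1} := by
    ext ρ
    exact ⟨fun hh => ⟨⟨hh.1.1, hh.1.dotProduct_mulVec_nonneg⟩, hh.2⟩,
      fun hh => ⟨Matrix.PosSemidef.of_dotProduct_mulVec_nonneg hh.1.1 hh.1.2, hh.2⟩⟩
  rw [this]
  exact (h1.inter h2).inter h3

lemma isCompact_density : IsCompact {ρ : Matrix (Fin d) (Fin d) ℂ | IsDensityMatrix ρ} := by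
  have hcomp : IsCompact ((Set.univ.pi fun _ : Fin d => Set.univ.pi fun _ : Fin d =>
      Metric.closedBall (0 : ℂ) 1 : Set (Fin d → Fin d → ℂ)) : Set (Matrix (Fin d) (Fin d) ℂ)) :=
    isCompact_univ_pi fun _ => isCompact_univ_pi fun _ => isCompact_closedBall 0 1
  refine hcomp.of_isClosed_subset isClosed_density ?_
  intro ρ hρ
  intro i _
  intro j _
  rw [Metric.mem_closedBall, dist_zero_right]
  exact entry_norm_le hρ i j

lemma traceNorm_key (A : Matrix (Fin d) (Fin d) ℂ) :
    0 ≤ traceNorm A ∧ traceNorm A ^ 2 ≤ d * ((Aᴴ * A).trace).re := by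
  have hU1 : star ((Matrix.posSemidef_conjTranspose_mul_self A).1.eigenvectorUnitary : M) *
      ((Matrix.posSemidef_conjTranspose_mul_self A).1.eigenvectorUnitary : M) = 1 :=
    ((Unitary.mem_iff).mp (Matrix.posSemidef_conjTranspose_mul_self A).1.eigenvectorUnitary.2).1
  have hTN : traceNorm A
      = ∑ i, Real.sqrt ((Matrix.posSemidef_conjTranspose_mul_self A).1.eigenvalues i) := by
    rw [traceNorm, Matrix.trace_mul_cycle, hU1, Matrix.one_mul, Matrix.trace_diagonal]
    simp
  have hsq : ((Aᴴ * A).trace).re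
      = ∑ i, (Matrix.posSemidef_conjTranspose_mul_self A).1.eigenvalues i := by
    rw [trace_eq_sum_eigenvalues (Matrix.posSemidef_conjTranspose_mul_self A).1]
    simp
  have hev := fun i => (Matrix.posSemidef_conjTranspose_mul_self A).eigenvalues_nonneg i
  constructor
  · rw [hTN]; exact Finset.sum_nonneg fun i _ => Real.sqrt_nonneg _
  · rw [hTN, hsq]
    calc (∑ i, Real.sqrt ((Matrix.posSemidef_conjTranspose_mul_self A).1.eigenvalues i)) ^ 2
        ≤ (Finset.univ.card : ℝ) *
            ∑ i, (Real.sqrt ((Matrix.posSemidef_conjTranspose_mul_self A).1.eigenvalues i)) ^ 2 :=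
          sq_sum_le_card_mul_sum_sq
      _ = d * ∑ i, (Matrix.posSemidef_conjTranspose_mul_self A).1.eigenvalues i := by
          rw [Finset.card_univ, Fintype.card_fin]
          congr 1
          exact Finset.sum_congr rfl fun i _ => Real.sq_sqrt (hev i)

lemma traceNorm_tendsto {An : ℕ → Matrix (Fin d) (Fin d) ℂ}
    (h : Filter.Tendsto An Filter.atTop (nhds 0)) :
    Filter.Tendsto (fun n => traceNorm (An n)) Filter.atTop (nhds 0) := by
  have hcont : Continuous fun B : Matrix (Fin d) (Fin d) ℂ => ((Bᴴ * B).trace).re :=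
    Complex.continuous_re.comp ((continuous_id.matrix_conjTranspose.matrix_mul
      continuous_id).matrix_trace)
  have h0 : Filter.Tendsto (fun n => (((An n)ᴴ * An n).trace).re) Filter.atTop (nhds 0) := by
    have := (hcont.tendsto 0).comp h
    simpa [Function.comp_def] using this
  have hmul : Filter.Tendsto (fun n => (d : ℝ) * (((An n)ᴴ * An n).trace).re)
      Filter.atTop (nhds 0) := by simpa using h0.const_mul (d : ℝ)
  have hsqrt : Filter.Tendsto (fun n => Real.sqrt ((d : ℝ) * (((An n)ᴴ * An n).trace).re))
      Filter.atTop (nhds 0) := by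
    have := (Real.continuous_sqrt.tendsto 0).comp hmul
    simpa only [Function.comp_def, Real.sqrt_zero] using this
  refine tendsto_of_tendsto_of_tendsto_of_le_of_le tendsto_const_nhds hsqrt
    (fun n => (traceNorm_key (An n)).1) (fun n => ?_)
  have hk := traceNorm_key (An n)
  have hnonneg : 0 ≤ (d : ℝ) * (((An n)ᴴ * An n).trace).re := le_trans (sq_nonneg _) hk.2
  exact (Real.le_sqrt hk.1 hnonneg).mpr hk.2


lemma unitary_rowsum {B : Matrix (Fin d) (Fin d) ℂ} (hB : B * star B = 1) (i : Fin d) :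
    ∑ j, Complex.normSq (B i j) = 1 := by
  have h := congrFun (congrFun hB i) i
  rw [Matrix.mul_apply, Matrix.one_apply_eq] at h
  have h' : ∑ j, ((Complex.normSq (B i j) : ℂ)) = 1 := by
    rw [← h]
    refine Finset.sum_congr rfl fun j _ => ?_
    rw [Matrix.star_apply, Complex.star_def]
    exact (Complex.mul_conj _).symm
  have : ((∑ j, Complex.normSq (B i j) : ℝ) : ℂ) = ((1 : ℝ) : ℂ) := by push_cast; exact h'.trans (by norm_num)
  exact_mod_cast this

lemma unitary_colsum {B : Matrix (Fin d) (Fin d) ℂ} (hB : star B * B = 1) (j : Fin d) :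
    ∑ i, Complex.normSq (B i j) = 1 := by
  have h := unitary_rowsum (B := star B) (by rwa [star_star]) j
  simpa [Matrix.star_apply, Complex.normSq_conj] using h

lemma conj_entry {ρ w : Matrix (Fin d) (Fin d) ℂ} (hρ : ρ.IsHermitian) (i l : Fin d) :
    (star w * ρ * w) i l
      = ∑ j, (star w * (hρ.eigenvectorUnitary : Matrix (Fin d) (Fin d) ℂ)) i j
          * star ((star w * (hρ.eigenvectorUnitary : Matrix (Fin d) (Fin d) ℂ)) l j)
          * (hρ.eigenvalues j : ℂ) := by
  set u := (hρ.eigenvectorUnitary : Matrix (Fin d) (Fin d) ℂ) with hu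
  set D := Matrix.diagonal ((RCLike.ofReal ∘ hρ.eigenvalues : Fin d → ℂ)) with hD
  have key : star w * ρ * w = (star w * u) * D * star (star w * u) := by
    conv_lhs => rw [hρ.spectral_theorem, Unitary.conjStarAlgAut_apply]
    simp only [star_mul, star_star, Matrix.mul_assoc]
    rfl
  rw [key, Matrix.mul_apply]
  refine Finset.sum_congr rfl fun j _ => ?_
  rw [Matrix.mul_diagonal, Matrix.star_apply]
  simp [hD, mul_comm, mul_assoc, mul_left_comm]

lemma maximizer_unique {k : ℕ} (X : Fin k → Matrix (Fin d) (Fin d) ℂ) (m : Fin k → ℝ)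
    {ρ τ : Matrix (Fin d) (Fin d) ℂ} (hρ : ρ ∈ constraintSet X m) (hτ : τ ∈ constraintSet X m)
    (hmax : ∀ ϱ ∈ constraintSet X m, entropy ϱ ≤ entropy ρ)
    (hent : entropy τ = entropy ρ) : τ = ρ := by
  have hhalf : (0 : ℂ) ≤ 2⁻¹ := by
    rw [Complex.le_def]
    norm_num
  set μ : Matrix (Fin d) (Fin d) ℂ := (2⁻¹ : ℂ) • ρ + (2⁻¹ : ℂ) • τ with hμdef
  have hconjhalf : star (2⁻¹ : ℂ) = 2⁻¹ := by simp [Complex.star_def, Complex.conj_ofNat]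
  have hμherm : μ.IsHermitian := by
    have h1 : ρᴴ = ρ := hρ.1.1.1
    have h2 : τᴴ = τ := hτ.1.1.1
    show μᴴ = μ
    rw [hμdef, Matrix.conjTranspose_add, Matrix.conjTranspose_smul, Matrix.conjTranspose_smul,
      h1, h2, hconjhalf]
  have hμpsd : μ.PosSemidef := by
    refine Matrix.PosSemidef.of_dotProduct_mulVec_nonneg hμherm fun x => ?_
    have e : dotProduct (star x) (μ *ᵥ x)
        = 2⁻¹ * dotProduct (star x) (ρ *ᵥ x)
          + 2⁻¹ * dotProduct (star x) (τ *ᵥ x) := by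
      rw [hμdef, Matrix.add_mulVec, Matrix.smul_mulVec, Matrix.smul_mulVec,
        dotProduct_add, dotProduct_smul, dotProduct_smul]
      simp [smul_eq_mul]
    rw [e]
    exact add_nonneg (mul_nonneg hhalf (hρ.1.1.dotProduct_mulVec_nonneg x)) (mul_nonneg hhalf (hτ.1.1.dotProduct_mulVec_nonneg x))
  have hμtr : μ.trace = 1 := by
    rw [hμdef, Matrix.trace_add, Matrix.trace_smul, Matrix.trace_smul, hρ.1.2, hτ.1.2]
    simp
    norm_num
  have hμmom : ∀ i, (μ * X i).trace = (m i : ℂ) := by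
    intro i
    rw [hμdef, Matrix.add_mul, Matrix.smul_mul, Matrix.smul_mul, Matrix.trace_add,
      Matrix.trace_smul, Matrix.trace_smul, hρ.2 i, hτ.2 i]
    simp [smul_eq_mul]
    ring
  have hμC : μ ∈ constraintSet X m := ⟨⟨hμpsd, hμtr⟩, hμmom⟩
  have hμle : entropy μ ≤ entropy ρ := hmax μ hμC
  -- eigen-data
  have hrh : ρ.IsHermitian := hρ.1.1.1
  have hth : τ.IsHermitian := hτ.1.1.1
  set w : Matrix (Fin d) (Fin d) ℂ := (hμherm.eigenvectorUnitary : Matrix (Fin d) (Fin d) ℂ)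
    with hwdef
  set u : Matrix (Fin d) (Fin d) ℂ := (hrh.eigenvectorUnitary : Matrix (Fin d) (Fin d) ℂ)
    with hudef
  set v : Matrix (Fin d) (Fin d) ℂ := (hth.eigenvectorUnitary : Matrix (Fin d) (Fin d) ℂ)
    with hvdef
  have hw1 : star w * w = 1 := Matrix.mem_unitaryGroup_iff'.mp hμherm.eigenvectorUnitary.2
  have hw2 : w * star w = 1 := Matrix.mem_unitaryGroup_iff.mp hμherm.eigenvectorUnitary.2
  have hu1 : star u * u = 1 := Matrix.mem_unitaryGroup_iff'.mp hrh.eigenvectorUnitary.2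
  have hu2 : u * star u = 1 := Matrix.mem_unitaryGroup_iff.mp hrh.eigenvectorUnitary.2
  have hv1 : star v * v = 1 := Matrix.mem_unitaryGroup_iff'.mp hth.eigenvectorUnitary.2
  have hv2 : v * star v = 1 := Matrix.mem_unitaryGroup_iff.mp hth.eigenvectorUnitary.2
  set B : Matrix (Fin d) (Fin d) ℂ := star w * u with hBdef
  set C : Matrix (Fin d) (Fin d) ℂ := star w * v with hCdef
  set p : Fin d → ℝ := hrh.eigenvalues with hpdef
  set q : Fin d → ℝ := hth.eigenvalues with hqdef
  set mm : Fin d → ℝ := hμherm.eigenvalues with hmmdef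
  have hB2 : B * star B = 1 := by
    rw [hBdef, star_mul, star_star]
    calc star w * u * (star u * w) = star w * (u * star u) * w := by
          simp only [Matrix.mul_assoc]
      _ = 1 := by rw [hu2, Matrix.mul_one, hw1]
  have hB1 : star B * B = 1 := by
    rw [hBdef, star_mul, star_star]
    calc star u * w * (star w * u) = star u * (w * star w) * u := by
          simp only [Matrix.mul_assoc]
      _ = 1 := by rw [hw2, Matrix.mul_one, hu1]
  have hC2 : C * star C = 1 := by
    rw [hCdef, star_mul, star_star]
    calc star w * v * (star v * w) = star w * (v * star v) * w := by
          simp only [Matrix.mul_assoc]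
      _ = 1 := by rw [hv2, Matrix.mul_one, hw1]
  have hC1 : star C * C = 1 := by
    rw [hCdef, star_mul, star_star]
    calc star v * w * (star w * v) = star v * (w * star w) * v := by
          simp only [Matrix.mul_assoc]
      _ = 1 := by rw [hw2, Matrix.mul_one, hv1]
  set c : Fin d → Fin d → ℝ := fun i j => Complex.normSq (B i j) with hcdef
  set c' : Fin d → Fin d → ℝ := fun i j => Complex.normSq (C i j) with hc'def
  set a : Fin d → ℝ := fun i => ∑ j, c i j * p j with hadef
  set b : Fin d → ℝ := fun i => ∑ j, c' i j * q j with hbdef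
  have hrow : ∀ i, ∑ j, c i j = 1 := fun i => unitary_rowsum hB2 i
  have hcol : ∀ j, ∑ i, c i j = 1 := fun j => unitary_colsum hB1 j
  have hrow' : ∀ i, ∑ j, c' i j = 1 := fun i => unitary_rowsum hC2 i
  have hcol' : ∀ j, ∑ i, c' i j = 1 := fun j => unitary_colsum hC1 j
  have hentryρ : ∀ i l, (star w * ρ * w) i l = ∑ j, B i j * star (B l j) * (p j : ℂ) :=
    fun i l => conj_entry hrh i l
  have hentryτ : ∀ i l, (star w * τ * w) i l = ∑ j, C i j * star (C l j) * (q j : ℂ) :=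
    fun i l => conj_entry hth i l
  have hdiagρ : ∀ i, (star w * ρ * w) i i = ((a i : ℝ) : ℂ) := by
    intro i
    rw [hentryρ i i]
    have e : ∀ j, B i j * star (B i j) * (p j : ℂ) = ((c i j * p j : ℝ) : ℂ) := by
      intro j
      rw [Complex.star_def, Complex.mul_conj]
      push_cast
      ring
    rw [Finset.sum_congr rfl fun j _ => e j, hadef]
    push_cast
    rfl
  have hdiagτ : ∀ i, (star w * τ * w) i i = ((b i : ℝ) : ℂ) := by
    intro i
    rw [hentryτ i i]
    have e : ∀ j, C i j * star (C i j) * (q j : ℂ) = ((c' i j * q j : ℝ) : ℂ) := by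
      intro j
      rw [Complex.star_def, Complex.mul_conj]
      push_cast
      ring
    rw [Finset.sum_congr rfl fun j _ => e j, hbdef]
    push_cast
    rfl
  have hm_eq : ∀ i, mm i = (a i + b i) / 2 := by
    intro i
    have hdiagμ : star w * μ * w
        = Matrix.diagonal ((RCLike.ofReal ∘ mm : Fin d → ℂ)) :=
      by
        have h := hμherm.conjStarAlgAut_star_eigenvectorUnitary
        rw [Unitary.conjStarAlgAut_star_apply] at h
        exact h
    have hsplit : star w * μ * w
        = (2⁻¹ : ℂ) • (star w * ρ * w) + (2⁻¹ : ℂ) • (star w * τ * w) := by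
      rw [hμdef]
      simp only [Matrix.mul_add, Matrix.add_mul, Matrix.mul_smul, Matrix.smul_mul]
    have hkey := congrFun (congrFun (hdiagμ.symm.trans hsplit) i) i
    rw [Matrix.diagonal_apply_eq, Matrix.add_apply, Matrix.smul_apply, Matrix.smul_apply,
      hdiagρ i, hdiagτ i, smul_eq_mul, smul_eq_mul] at hkey
    have : ((mm i : ℝ) : ℂ) = (((a i + b i) / 2 : ℝ) : ℂ) := by
      rw [show ((mm i : ℝ) : ℂ) = (RCLike.ofReal ∘ mm : Fin d → ℂ) i from rfl, hkey]
      push_cast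
      ring
    exact_mod_cast this
  -- Jensen inequalities
  have hconc := Real.strictConcaveOn_negMulLog
  have hpmem : ∀ j, p j ∈ Set.Ici (0 : ℝ) := fun j => hρ.1.1.eigenvalues_nonneg j
  have hqmem : ∀ j, q j ∈ Set.Ici (0 : ℝ) := fun j => hτ.1.1.eigenvalues_nonneg j
  have hcnn : ∀ i j, 0 ≤ c i j := fun i j => Complex.normSq_nonneg _
  have hcnn' : ∀ i j, 0 ≤ c' i j := fun i j => Complex.normSq_nonneg _
  have hamem : ∀ i, a i ∈ Set.Ici (0 : ℝ) := fun i =>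
    Finset.sum_nonneg fun j _ => mul_nonneg (hcnn i j) (hpmem j)
  have hbmem : ∀ i, b i ∈ Set.Ici (0 : ℝ) := fun i =>
    Finset.sum_nonneg fun j _ => mul_nonneg (hcnn' i j) (hqmem j)
  have hJa : ∀ i, ∑ j, c i j * Real.negMulLog (p j) ≤ Real.negMulLog (a i) := by
    intro i
    have h := hconc.concaveOn.le_map_sum (t := Finset.univ) (w := fun j => c i j) (p := p)
      (fun j _ => hcnn i j) (hrow i) (fun j _ => hpmem j)
    simpa only [smul_eq_mul] using h
  have hJb : ∀ i, ∑ j, c' i j * Real.negMulLog (q j) ≤ Real.negMulLog (b i) := by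
    intro i
    have h := hconc.concaveOn.le_map_sum (t := Finset.univ) (w := fun j => c' i j) (p := q)
      (fun j _ => hcnn' i j) (hrow' i) (fun j _ => hqmem j)
    simpa only [smul_eq_mul] using h
  have ηsumρ : entropy ρ = ∑ i, ∑ j, c i j * Real.negMulLog (p j) := by
    rw [entropy_eq_sum hrh, Finset.sum_comm]
    refine Finset.sum_congr rfl fun j _ => ?_
    rw [← Finset.sum_mul, hcol j, one_mul]
  have ηsumτ : entropy τ = ∑ i, ∑ j, c' i j * Real.negMulLog (q j) := by
    rw [entropy_eq_sum hth, Finset.sum_comm]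
    refine Finset.sum_congr rfl fun j _ => ?_
    rw [← Finset.sum_mul, hcol' j, one_mul]
  have hA : entropy ρ ≤ ∑ i, Real.negMulLog (a i) := by
    rw [ηsumρ]; exact Finset.sum_le_sum fun i _ => hJa i
  have hBineq : entropy τ ≤ ∑ i, Real.negMulLog (b i) := by
    rw [ηsumτ]; exact Finset.sum_le_sum fun i _ => hJb i
  have hmid : ∀ i, (Real.negMulLog (a i) + Real.negMulLog (b i)) / 2
      ≤ Real.negMulLog (mm i) := by
    intro i
    rw [hm_eq i]
    have h := hconc.concaveOn.2 (hamem i) (hbmem i)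
      (by norm_num : (0:ℝ) ≤ 1/2) (by norm_num : (0:ℝ) ≤ 1/2) (by norm_num : (1:ℝ)/2 + 1/2 = 1)
    simp only [smul_eq_mul] at h
    calc (Real.negMulLog (a i) + Real.negMulLog (b i)) / 2
        = 1/2 * Real.negMulLog (a i) + 1/2 * Real.negMulLog (b i) := by ring
      _ ≤ Real.negMulLog (1/2 * a i + 1/2 * b i) := h
      _ = Real.negMulLog ((a i + b i) / 2) := by ring_nf
  have Sμ : entropy μ = ∑ i, Real.negMulLog (mm i) := entropy_eq_sum hμherm
  have key1 : ∑ i, Real.negMulLog (mm i) ≤ entropy ρ := Sμ ▸ hμle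
  have key2 : (∑ i, Real.negMulLog (a i) + ∑ i, Real.negMulLog (b i)) / 2
      ≤ ∑ i, Real.negMulLog (mm i) := by
    have h := Finset.sum_le_sum (fun i (_ : i ∈ Finset.univ) => hmid i)
    calc (∑ i, Real.negMulLog (a i) + ∑ i, Real.negMulLog (b i)) / 2
        = ∑ i, (Real.negMulLog (a i) + Real.negMulLog (b i)) / 2 := by
          rw [← Finset.sum_add_distrib, Finset.sum_div]
      _ ≤ ∑ i, Real.negMulLog (mm i) := h
  have hAe : ∑ i, Real.negMulLog (a i) = entropy ρ := by
    have : ∑ i, Real.negMulLog (a i) ≤ entropy ρ := by linarith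
    linarith
  have hBe : ∑ i, Real.negMulLog (b i) = entropy ρ := by linarith
  have hMe : ∑ i, Real.negMulLog (mm i) = entropy ρ := by linarith
  have eqmid : ∀ i ∈ Finset.univ, (Real.negMulLog (a i) + Real.negMulLog (b i)) / 2
      = Real.negMulLog (mm i) := by
    rw [← Finset.sum_eq_sum_iff_of_le (fun i _ => hmid i)]
    calc ∑ i, (Real.negMulLog (a i) + Real.negMulLog (b i)) / 2
        = (∑ i, Real.negMulLog (a i) + ∑ i, Real.negMulLog (b i)) / 2 := by
          rw [← Finset.sum_add_distrib, Finset.sum_div]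
      _ = ∑ i, Real.negMulLog (mm i) := by rw [hAe, hBe, hMe]; ring
  have eqJa : ∀ i ∈ Finset.univ, ∑ j, c i j * Real.negMulLog (p j)
      = Real.negMulLog (a i) := by
    rw [← Finset.sum_eq_sum_iff_of_le (fun i _ => hJa i)]
    rw [← ηsumρ, hAe]
  have eqJb : ∀ i ∈ Finset.univ, ∑ j, c' i j * Real.negMulLog (q j)
      = Real.negMulLog (b i) := by
    rw [← Finset.sum_eq_sum_iff_of_le (fun i _ => hJb i)]
    rw [← ηsumτ, hBe, hent]
  have hab : ∀ i, a i = b i := by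
    intro i
    by_contra hne
    have h := hconc.2 (hamem i) (hbmem i) hne
      (by norm_num : (0:ℝ) < 1/2) (by norm_num : (0:ℝ) < 1/2) (by norm_num : (1:ℝ)/2 + 1/2 = 1)
    simp only [smul_eq_mul] at h
    have h1 := eqmid i (Finset.mem_univ i)
    rw [hm_eq i] at h1
    have h2 : Real.negMulLog ((a i + b i) / 2) = Real.negMulLog (1/2 * a i + 1/2 * b i) := by
      ring_nf
    linarith [h1, h2 ▸ h]
  have hconst : ∀ i j, c i j ≠ 0 → p j = a i := by
    intro i j hcij
    have heq : Real.negMulLog (∑ j, c i j • p j) = ∑ j, c i j • Real.negMulLog (p j) := by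
      simpa only [smul_eq_mul] using (eqJa i (Finset.mem_univ i)).symm
    have h := (hconc.map_sum_eq_iff' (t := Finset.univ) (w := fun j => c i j) (p := p)
      (fun j _ => hcnn i j) (hrow i) (fun j _ => hpmem j)).1 heq j (Finset.mem_univ j) hcij
    simpa only [smul_eq_mul] using h
  have hconst' : ∀ i j, c' i j ≠ 0 → q j = b i := by
    intro i j hcij
    have heq : Real.negMulLog (∑ j, c' i j • q j) = ∑ j, c' i j • Real.negMulLog (q j) := by
      simpa only [smul_eq_mul] using (eqJb i (Finset.mem_univ i)).symm
    have h := (hconc.map_sum_eq_iff' (t := Finset.univ) (w := fun j => c' i j) (p := q)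
      (fun j _ => hcnn' i j) (hrow' i) (fun j _ => hqmem j)).1 heq j (Finset.mem_univ j) hcij
    simpa only [smul_eq_mul] using h
  have hρdiag : star w * ρ * w = Matrix.diagonal (fun i => ((a i : ℝ) : ℂ)) := by
    ext i l
    rw [hentryρ i l]
    have e : ∀ j, B i j * star (B l j) * (p j : ℂ) = B i j * star (B l j) * ((a i : ℝ) : ℂ) := by
      intro j
      by_cases hz : B i j = 0
      · rw [hz]; ring
      · have hc : c i j ≠ 0 := by
          rw [hcdef]
          simpa only [ne_eq, Complex.normSq_eq_zero] using hz
        rw [hconst i j hc]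
    rw [Finset.sum_congr rfl fun j _ => e j, ← Finset.sum_mul]
    have e2 : ∑ j, B i j * star (B l j) = (B * star B) i l := by
      rw [Matrix.mul_apply]
      exact Finset.sum_congr rfl fun j _ => by rw [Matrix.star_apply]
    rw [e2, hB2]
    by_cases hil : i = l
    · subst hil; simp [Matrix.one_apply_eq, Matrix.diagonal_apply_eq]
    · simp [Matrix.one_apply_ne hil, Matrix.diagonal_apply_ne _ hil]
  have hτdiag : star w * τ * w = Matrix.diagonal (fun i => ((b i : ℝ) : ℂ)) := by
    ext i l
    rw [hentryτ i l]
    have e : ∀ j, C i j * star (C l j) * (q j : ℂ) = C i j * star (C l j) * ((b i : ℝ) : ℂ) := by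
      intro j
      by_cases hz : C i j = 0
      · rw [hz]; ring
      · have hc : c' i j ≠ 0 := by
          rw [hc'def]
          simpa only [ne_eq, Complex.normSq_eq_zero] using hz
        rw [hconst' i j hc]
    rw [Finset.sum_congr rfl fun j _ => e j, ← Finset.sum_mul]
    have e2 : ∑ j, C i j * star (C l j) = (C * star C) i l := by
      rw [Matrix.mul_apply]
      exact Finset.sum_congr rfl fun j _ => by rw [Matrix.star_apply]
    rw [e2, hC2]
    by_cases hil : i = l
    · subst hil; simp [Matrix.one_apply_eq, Matrix.diagonal_apply_eq]
    · simp [Matrix.one_apply_ne hil, Matrix.diagonal_apply_ne _ hil]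
  have hsame : star w * τ * w = star w * ρ * w := by
    have hfe : (fun i => ((b i : ℝ) : ℂ)) = fun i => ((a i : ℝ) : ℂ) :=
      funext fun i => by rw [hab i]
    rw [hρdiag, hτdiag, hfe]
  have cancel : ∀ A : Matrix (Fin d) (Fin d) ℂ, w * (star w * A * w) * star w = A := by
    intro A
    calc w * (star w * A * w) * star w = (w * star w) * A * (w * star w) := by
          simp only [Matrix.mul_assoc]
      _ = A := by rw [hw2, Matrix.one_mul, Matrix.mul_one]
  calc τ = w * (star w * τ * w) * star w := (cancel τ).symm
    _ = w * (star w * ρ * w) * star w := by rw [hsame]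
    _ = ρ := cancel ρ

end Aux

/-- Main stability theorem: if `tr(ρₙXᵢ) → mᵢ` for each `i` and
`S(ρₙ) → S(σ)`, where `σ` is the unique entropy maximizer over `C(m)`, then
`‖ρₙ − σ‖₁ → 0` and consequently `tr((ρₙ − σ)A) → 0` for every matrix `A`. -/
theorem main_stability
    (d k : ℕ) (hd : 0 < d) (X : Fin k → Matrix (Fin d) (Fin d) ℂ)
    (hX : ∀ i, (X i).IsHermitian) (m : Fin k → ℝ) (hm : m ∈ momentSet X)
    (σ : Matrix (Fin d) (Fin d) ℂ) (hσ : σ ∈ constraintSet X m)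
    (hσmax : ∀ ρ ∈ constraintSet X m, entropy ρ ≤ entropy σ)
    (ρseq : ℕ → Matrix (Fin d) (Fin d) ℂ) (hρseq : ∀ n, IsDensityMatrix (ρseq n))
    (hmom : ∀ i, Filter.Tendsto (fun n => (ρseq n * X i).trace) Filter.atTop (nhds (m i : ℂ)))
    (hent : Filter.Tendsto (fun n => entropy (ρseq n)) Filter.atTop (nhds (entropy σ))) :
    Filter.Tendsto (fun n => traceNorm (ρseq n - σ)) Filter.atTop (nhds 0) ∧
      ∀ A : Matrix (Fin d) (Fin d) ℂ,
        Filter.Tendsto (fun n => ((ρseq n - σ) * A).trace) Filter.atTop (nhds 0) := by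
  classical
  haveI : FirstCountableTopology (Matrix (Fin d) (Fin d) ℂ) :=
    inferInstanceAs (FirstCountableTopology (Fin d → Fin d → ℂ))
  have hK : IsCompact {ρ : Matrix (Fin d) (Fin d) ℂ | IsDensityMatrix ρ} := isCompact_density
  have hlim : Filter.Tendsto ρseq Filter.atTop (nhds σ) := by
    apply Filter.tendsto_of_subseq_tendsto
    intro ns hns
    obtain ⟨ρl, hρl, φ, hφ, htend⟩ := hK.tendsto_subseq (x := fun n => ρseq (ns n))
      (fun n => hρseq (ns n))
    have hcomp : Filter.Tendsto (fun n => ns (φ n)) Filter.atTop Filter.atTop :=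
      hns.comp hφ.tendsto_atTop
    have hmom' : ∀ i, (ρl * X i).trace = (m i : ℂ) := by
      intro i
      have hc : Continuous fun A : Matrix (Fin d) (Fin d) ℂ => (A * X i).trace :=
        (continuous_id.matrix_mul continuous_const).matrix_trace
      have h1 : Filter.Tendsto (fun n => ((ρseq (ns (φ n))) * X i).trace) Filter.atTop
          (nhds ((ρl * X i).trace)) := (hc.tendsto ρl).comp htend
      have h2 : Filter.Tendsto (fun n => ((ρseq (ns (φ n))) * X i).trace) Filter.atTop
          (nhds ((m i : ℂ))) := (hmom i).comp hcomp
      exact tendsto_nhds_unique h1 h2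
    have hentl : entropy ρl = entropy σ := by
      have h1 := entropy_tendsto (fun n => hρseq (ns (φ n))) hρl htend
      have h2 : Filter.Tendsto (fun n => entropy (ρseq (ns (φ n)))) Filter.atTop
          (nhds (entropy σ)) := hent.comp hcomp
      exact tendsto_nhds_unique h1 h2
    have hρlC : ρl ∈ constraintSet X m := ⟨hρl, hmom'⟩
    have hρlσ : ρl = σ := maximizer_unique X m hσ hρlC hσmax hentl
    exact ⟨φ, hρlσ ▸ htend⟩
  have hdiff : Filter.Tendsto (fun n => ρseq n - σ) Filter.atTop (nhds 0) := by
    have := hlim.sub (tendsto_const_nhds (x := σ))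
    simpa using this
  constructor
  · exact traceNorm_tendsto hdiff
  · intro A
    have hc : Continuous fun B : Matrix (Fin d) (Fin d) ℂ => (B * A).trace :=
      (continuous_id.matrix_mul continuous_const).matrix_trace
    have := (hc.tendsto 0).comp hdiff
    simpa [Function.comp_def] using this


end MaxEnt
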